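/- For k ≥ 4, let T_k be the tree obtained from the star K_{1,k} by subdividing every edge exactly three times. Then the open-open irredundance number of T_k equals 2(k+1). -/

import Mathlib

variable {V : Type*}

/-- `S` is a total dominating set of `G`: every vertex has a neighbor in `S`. -/
def isTDSet (G : SimpleGraph V) (S : Set V) : Prop := ∀ v : V, ∃ u ∈ S, G.Adj v u

/-- `S` is a minimal total dominating set of `G`. -/
def isMinTDSet (G : SimpleGraph V) (S : Set V) : Prop :=
  isTDSet G S ∧ ∀ T : Set V, T ⊂ S → ¬ isTDSet G T

/-- Upper total domination number `Γ_t`. -/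
noncomputable def upperTD (G : SimpleGraph V) [Fintype V] : ℕ :=
  sSup {n | ∃ S : Finset V, isMinTDSet G ↑S ∧ S.card = n}

/-- Total domination number `γ_t`. -/
noncomputable def totalDomNum (G : SimpleGraph V) [Fintype V] : ℕ :=
  sInf {n | ∃ S : Finset V, isTDSet G ↑S ∧ S.card = n}

/-- `S` is an open-open irredundant set: each `v ∈ S` has a neighbor not adjacent
to any other vertex of `S`, i.e. `N(v) \ N(S \ {v}) ≠ ∅`. -/
def isOOIrr (G : SimpleGraph V) (S : Set V) : Prop :=
  ∀ v ∈ S, ∃ w, G.Adj v w ∧ ∀ u ∈ S, u ≠ v → ¬ G.Adj u w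

/-- Open-open irredundance number `OOIR`. -/
noncomputable def ooirNum (G : SimpleGraph V) [Fintype V] : ℕ :=
  sSup {n | ∃ S : Finset V, isOOIrr G ↑S ∧ S.card = n}

/-- `M` is an induced matching: a set of edges of `G` whose endpoints induce a
1-regular subgraph (no two distinct edges share or join endpoints). -/
def isInducedMatching (G : SimpleGraph V) (M : Set (Sym2 V)) : Prop :=
  (∀ e ∈ M, e ∈ G.edgeSet) ∧
  ∀ e ∈ M, ∀ f ∈ M, e ≠ f → ∀ u ∈ e, ∀ v ∈ f, u ≠ v ∧ ¬ G.Adj u v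

/-- Induced matching number `ν_I`. -/
noncomputable def inducedMatchingNum (G : SimpleGraph V) [Fintype V] : ℕ :=
  sSup {n | ∃ M : Finset (Sym2 V), isInducedMatching G ↑M ∧ M.card = n}

/-- `L` is a total dominating sequence of `G`. -/
def isTDSeq (G : SimpleGraph V) (L : List V) : Prop :=
  L.Nodup ∧ isTDSet G {v | v ∈ L} ∧
  ∀ (i : ℕ) (h : i < L.length), ∃ w, G.Adj L[i] w ∧ ∀ u ∈ L.take i, ¬ G.Adj u w

/-- Grundy total domination number. -/
noncomputable def grundyTD (G : SimpleGraph V) [Fintype V] : ℕ :=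
  sSup {n | ∃ L : List V, isTDSeq G L ∧ L.length = n}


/-- The tree obtained from `K_{1,k}` by subdividing every edge three times: center
`v = Sum.inl ()` and paths `v, (i,0), (i,1), (i,2), (i,3)`, i.e. `v u_i v_i w_i x_i`. -/
def T3star (k : ℕ) : SimpleGraph (Unit ⊕ Fin k × Fin 4) :=
  SimpleGraph.fromRel (fun a b =>
    match a, b with
    | Sum.inl _, Sum.inr p => p.2 = 0
    | Sum.inr p, Sum.inr q => p.1 = q.1 ∧ (p.2 : ℕ) + 1 = (q.2 : ℕ)
    | _, _ => False)

/-!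
In an open-open irredundant set `S` of `T_k`, a branch `u_i v_i w_i x_i` holds at most three
vertices of `S`: if `x_i ∈ S`, its only neighbour `w_i` is its private neighbour, so `v_i ∉ S`.
A branch holding three vertices contains `u_i` and `w_i`; then `v_i` is not private to `u_i`,
so the centre is, and no other `u_j` lies in `S`. Hence `|S| ≤ 1 + 3 + 2(k - 1)`, and equality
holds for the centre, one `u_{i₀}` and all `w_i`, `x_i`.
-/
theorem isOOIrr.false_of_forall_adj {G : SimpleGraph V} {S : Set V} {v : V} (hS : isOOIrr G S)
    (hv : v ∈ S) (h : ∀ w, G.Adj v w → ∃ u ∈ S, u ≠ v ∧ G.Adj u w) : False := by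
  obtain ⟨w, hvw, hw⟩ := hS v hv
  obtain ⟨u, hu, huv, huw⟩ := h w hvw
  exact hw u hu huv huw

theorem Finset.card_eq_ite_inl_add_sum_ite_inr {ι β : Type*} [Fintype ι] [Fintype β]
    [DecidableEq ι] [DecidableEq β] (S : Finset (Unit ⊕ ι × β)) :
    S.card = (if Sum.inl () ∈ S then 1 else 0) +
      ∑ i, ∑ y, if Sum.inr (i, y) ∈ S then 1 else 0 := by
  calc S.card = ∑ v, if v ∈ S then 1 else 0 := by simp
    _ = _ := by
      rw [Fintype.sum_sum_type, Fintype.sum_prod_type]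
      simp [Finset.filter_singleton, apply_ite]

namespace T3star

open Finset Sum

variable {k : ℕ}

theorem adj_inr_inr {i j : Fin k} {a b : Fin 4} :
    (T3star k).Adj (inr (i, a)) (inr (j, b)) ↔ i = j ∧ ((a : ℕ) + 1 = b ∨ (b : ℕ) + 1 = a) := by
  simp only [T3star, SimpleGraph.fromRel_adj, ne_eq, inr.injEq, Prod.ext_iff, Fin.ext_iff]
  grind

theorem adj_inl_inr {j : Fin k} {b : Fin 4} : (T3star k).Adj (inl ()) (inr (j, b)) ↔ b = 0 := by
  simp [T3star]

theorem adj_inl_iff {w : Unit ⊕ Fin k × Fin 4} :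
    (T3star k).Adj (inl ()) w ↔ ∃ j, w = inr (j, 0) := by
  rcases w with ⟨⟩ | ⟨j, b⟩ <;> simp [adj_inl_inr]

theorem adj_zero_iff {i : Fin k} {w : Unit ⊕ Fin k × Fin 4} :
    (T3star k).Adj (inr (i, 0)) w ↔ w = inl () ∨ w = inr (i, 1) := by
  rcases w with ⟨⟨⟩⟩ | ⟨j, b⟩
  · simp [SimpleGraph.adj_comm _ (inr _), adj_inl_inr]
  · fin_cases b <;> simp [adj_inr_inr, eq_comm]

theorem adj_two_iff {i : Fin k} {w : Unit ⊕ Fin k × Fin 4} :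
    (T3star k).Adj (inr (i, 2)) w ↔ w = inr (i, 1) ∨ w = inr (i, 3) := by
  rcases w with ⟨⟨⟩⟩ | ⟨j, b⟩
  · simp [SimpleGraph.adj_comm _ (inr _), adj_inl_inr]
  · fin_cases b <;> simp [adj_inr_inr, eq_comm]

theorem adj_three_iff {i : Fin k} {w : Unit ⊕ Fin k × Fin 4} :
    (T3star k).Adj (inr (i, 3)) w ↔ w = inr (i, 2) := by
  rcases w with ⟨⟨⟩⟩ | ⟨j, b⟩
  · simp [SimpleGraph.adj_comm _ (inr _), adj_inl_inr]
  · fin_cases b <;> simp [adj_inr_inr, eq_comm]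

section UpperBound

variable {S : Finset (Unit ⊕ Fin k × Fin 4)} (hS : isOOIrr (T3star k) S)
include hS

theorem notMem_one_of_mem_three {i : Fin k} (h3 : inr (i, 3) ∈ S) : inr (i, 1) ∉ S := fun h1 =>
  hS.false_of_forall_adj h3 fun w hw =>
    ⟨inr (i, 1), h1, by simp, by rw [adj_three_iff.mp hw, adj_inr_inr]; simp⟩

theorem eq_of_mem_zero_of_mem_two_of_mem_zero {i j : Fin k} (h0 : inr (i, 0) ∈ S) (h2 : inr (i, 2) ∈ S)
    (hj : inr (j, 0) ∈ S) : j = i := by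
  by_contra hji
  refine hS.false_of_forall_adj h0 fun w hw => ?_
  rcases adj_zero_iff.mp hw with rfl | rfl
  · exact ⟨inr (j, 0), hj, by simpa using hji, adj_zero_iff.2 (Or.inl rfl)⟩
  · exact ⟨inr (i, 2), h2, by simp, by rw [adj_inr_inr]; simp⟩

theorem sum_branch_le (i : Fin k) :
    ∑ y : Fin 4, (if inr (i, y) ∈ S then 1 else 0) ≤
      2 + if inr (i, 0) ∈ S ∧ inr (i, 2) ∈ S then 1 else 0 := by
  have := notMem_one_of_mem_three hS (i := i)
  simp only [Fin.sum_univ_four]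
  split_ifs <;> simp_all

theorem card_filter_full_branches_le_one :
    (univ.filter fun i : Fin k => inr (i, 0) ∈ S ∧ inr (i, 2) ∈ S).card ≤ 1 :=
  card_le_one.2 fun i hi j hj => by
    simp only [mem_filter, mem_univ, true_and] at hi hj
    exact (eq_of_mem_zero_of_mem_two_of_mem_zero hS hi.1 hi.2 hj.1).symm

theorem card_le_of_isOOIrr : S.card ≤ 2 * (k + 1) := by
  have hfull := card_filter_full_branches_le_one hS
  calc S.card = _ := Finset.card_eq_ite_inl_add_sum_ite_inr S
    _ ≤ 1 + ∑ i : Fin k, (2 + if inr (i, 0) ∈ S ∧ inr (i, 2) ∈ S then 1 else 0) :=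
      add_le_add (by split_ifs <;> simp) (sum_le_sum fun i _ => sum_branch_le hS i)
    _ = 1 + 2 * k + (univ.filter fun i : Fin k => inr (i, 0) ∈ S ∧ inr (i, 2) ∈ S).card := by
      rw [sum_add_distrib, sum_boole]; simp [mul_comm, add_assoc]
    _ ≤ 2 * (k + 1) := by omega

end UpperBound

def maxOOIrrSet (i₀ : Fin k) : Finset (Unit ⊕ Fin k × Fin 4) :=
  univ.filter fun v => v = inl () ∨ v = inr (i₀, 0) ∨ (∃ i, v = inr (i, 2)) ∨ ∃ i, v = inr (i, 3)

theorem isOOIrr_maxOOIrrSet (i₀ : Fin k) : isOOIrr (T3star k) (maxOOIrrSet i₀) := by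
  intro v hv
  simp only [maxOOIrrSet, coe_filter, mem_univ, true_and, Set.mem_ofPred_eq] at hv
  rcases hv with rfl | rfl | ⟨i, rfl⟩ | ⟨i, rfl⟩
  · refine ⟨inr (i₀, 0), adj_inl_iff.2 ⟨i₀, rfl⟩, fun u hu hne hadj => ?_⟩
    rcases adj_zero_iff.mp hadj.symm with rfl | rfl
    · exact hne rfl
    · simp [maxOOIrrSet] at hu
  · refine ⟨inl (), adj_zero_iff.2 (Or.inl rfl), fun u hu hne hadj => ?_⟩
    obtain ⟨j, rfl⟩ := adj_inl_iff.mp hadj.symm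
    exact hne (by simpa [maxOOIrrSet] using hu)
  · exact ⟨inr (i, 3), adj_two_iff.2 (Or.inr rfl),
      fun u _ hne hadj => hne (adj_three_iff.mp hadj.symm)⟩
  · refine ⟨inr (i, 2), adj_three_iff.2 rfl, fun u hu hne hadj => ?_⟩
    rcases adj_two_iff.mp hadj.symm with rfl | rfl
    · simp [maxOOIrrSet] at hu
    · exact hne rfl

theorem card_maxOOIrrSet (i₀ : Fin k) : (maxOOIrrSet i₀).card = 2 * (k + 1) := by
  have hbranch (i : Fin k) : ∑ y : Fin 4, (if inr (i, y) ∈ maxOOIrrSet i₀ then 1 else 0) =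
      (if i = i₀ then 1 else 0) + 2 := by
    rw [Fin.sum_univ_four]
    by_cases h : i = i₀ <;> simp [maxOOIrrSet, Prod.ext_iff, h]
  have hcentre : inl () ∈ maxOOIrrSet i₀ := by simp [maxOOIrrSet]
  rw [Finset.card_eq_ite_inl_add_sum_ite_inr, if_pos hcentre, sum_congr rfl fun i _ => hbranch i,
    sum_add_distrib, sum_ite_eq', if_pos (mem_univ _), sum_const, card_univ, Fintype.card_fin,
    smul_eq_mul]
  ring

end T3star

/-- For `k ≥ 4`, `OOIR(T_k) = 2(k+1)` for the thrice-subdivided star. -/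
theorem stmt14 (k : ℕ) (hk : 4 ≤ k) : ooirNum (T3star k) = 2 * (k + 1) :=
  IsGreatest.csSup_eq
    ⟨⟨T3star.maxOOIrrSet ⟨0, by omega⟩, T3star.isOOIrr_maxOOIrrSet _, T3star.card_maxOOIrrSet _⟩,
      by rintro n ⟨S, hS, rfl⟩; exact T3star.card_le_of_isOOIrr hS⟩
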